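/- For a Weil algebra A and a smooth manifold M, the cohomology H^p(M^A, A) of the complex (Λ(M^A,A), d^A) is canonically isomorphic to A ⊗ H^p_dR(M^A); in particular, if M^A is connected then H^0(M^A, A) ≅ A. -/

import Mathlib

open scoped TensorProduct

/-- The cohomology (kernel mod image) at the middle spot of `M₁ → M₂ → M₃`. -/
def cohomOf {R : Type*} [Ring R] {M₁ M₂ M₃ : Type*}
    [AddCommGroup M₁] [AddCommGroup M₂] [AddCommGroup M₃]
    [Module R M₁] [Module R M₂] [Module R M₃]
    (f : M₁ →ₗ[R] M₂) (g : M₂ →ₗ[R] M₃) : Type _ :=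
  ↥(LinearMap.ker g) ⧸ (LinearMap.range f).comap (LinearMap.ker g).subtype

noncomputable instance {R : Type*} [Ring R] {M₁ M₂ M₃ : Type*}
    [AddCommGroup M₁] [AddCommGroup M₂] [AddCommGroup M₃]
    [Module R M₁] [Module R M₂] [Module R M₃]
    (f : M₁ →ₗ[R] M₂) (g : M₂ →ₗ[R] M₃) : AddCommGroup (cohomOf f g) :=
  inferInstanceAs (AddCommGroup (↥(LinearMap.ker g) ⧸
    (LinearMap.range f).comap (LinearMap.ker g).subtype))

noncomputable instance {R : Type*} [Ring R] {M₁ M₂ M₃ : Type*}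
    [AddCommGroup M₁] [AddCommGroup M₂] [AddCommGroup M₃]
    [Module R M₁] [Module R M₂] [Module R M₃]
    (f : M₁ →ₗ[R] M₂) (g : M₂ →ₗ[R] M₃) : Module R (cohomOf f g) :=
  inferInstanceAs (Module R (↥(LinearMap.ker g) ⧸
    (LinearMap.range f).comap (LinearMap.ker g).subtype))

open LinearMap

/-!
Tensoring with a flat algebra `A` is exact, so it commutes with kernels and cokernels. Writing
`H = ker g / im f` as the cokernel of `f` corestricted to `ker g`, the isomorphism
`A ⊗ ker g ≅ ker (id_A ⊗ g)` carries the corestriction of `id_A ⊗ f` to the base change of the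
corestriction of `f`, hence `A ⊗ H ≅ ker (id_A ⊗ g) / im (id_A ⊗ f)`. Over `ℝ` every algebra is
flat.
-/

section Cokernel

variable {R : Type*} [Ring R] {M₁ M₂ M₃ : Type*}
  [AddCommGroup M₁] [AddCommGroup M₂] [AddCommGroup M₃]
  [Module R M₁] [Module R M₂] [Module R M₃]
  {f : M₁ →ₗ[R] M₂} {g : M₂ →ₗ[R] M₃}

def LinearMap.toKer (hfg : g ∘ₗ f = 0) : M₁ →ₗ[R] ker g :=
  f.codRestrict (ker g) fun x => congr($hfg x)

@[simp]
lemma LinearMap.coe_toKer_apply (hfg : g ∘ₗ f = 0) (x : M₁) : (toKer hfg x : M₂) = f x :=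
  rfl

lemma comap_range_eq_range_toKer (hfg : g ∘ₗ f = 0) :
    (range f).comap (ker g).subtype = range (toKer hfg) := by
  ext y
  simp only [Submodule.mem_comap, Submodule.coe_subtype, mem_range]
  exact exists_congr fun x => by rw [← Subtype.coe_inj, coe_toKer_apply]

noncomputable def cohomOfEquivCokernel (hfg : g ∘ₗ f = 0) :
    cohomOf f g ≃ₗ[R] ker g ⧸ range (toKer hfg) :=
  Submodule.quotEquivOfEq _ _ (comap_range_eq_range_toKer hfg)

end Cokernel

section BaseChange

variable {R : Type*} [CommRing R] (A : Type*) [CommRing A] [Algebra R A]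

noncomputable def baseChangeQuotRangeEquiv {N P : Type*} [AddCommGroup N] [AddCommGroup P]
    [Module R N] [Module R P] (φ : N →ₗ[R] P) :
    A ⊗[R] (P ⧸ range φ) ≃ₗ[A] (A ⊗[R] P) ⧸ range (φ.baseChange A) :=
  (Function.Exact.linearEquivOfSurjective
    (g := (range φ).mkQ.baseChange A)
    (lTensor_exact A (exact_map_mkQ_range φ) (Submodule.mkQ_surjective _))
    (baseChange_surjective A (Submodule.mkQ_surjective _))).symm

variable {M₁ M₂ M₃ : Type*} [AddCommGroup M₁] [AddCommGroup M₂] [AddCommGroup M₃]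
  [Module R M₁] [Module R M₂] [Module R M₃] {f : M₁ →ₗ[R] M₂} {g : M₂ →ₗ[R] M₃}

lemma baseChange_comp_eq_zero (hfg : g ∘ₗ f = 0) : g.baseChange A ∘ₗ f.baseChange A = 0 := by
  rw [← baseChange_comp, hfg, baseChange_zero]

variable [Module.Flat R A]

noncomputable def kerBaseChangeEquiv (g : M₂ →ₗ[R] M₃) :
    A ⊗[R] ker g ≃ₗ[A] ker (g.baseChange A) :=
  tensorKerEquiv A A g

@[simp]
lemma coe_kerBaseChangeEquiv_tmul (g : M₂ →ₗ[R] M₃) (a : A) (y : ker g) :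
    (kerBaseChangeEquiv A g (a ⊗ₜ y) : A ⊗[R] M₂) = a ⊗ₜ (y : M₂) :=
  rfl

lemma kerBaseChangeEquiv_comp_baseChange_toKer (hfg : g ∘ₗ f = 0) :
    (kerBaseChangeEquiv A g).toLinearMap ∘ₗ (toKer hfg).baseChange A =
      toKer (baseChange_comp_eq_zero A hfg) := by
  ext x
  simp

noncomputable def cohomOfBaseChangeEquiv (hfg : g ∘ₗ f = 0) :
    A ⊗[R] cohomOf f g ≃ₗ[A] cohomOf (f.baseChange A) (g.baseChange A) :=
  (cohomOfEquivCokernel hfg).baseChange R A _ _ ≪≫ₗ baseChangeQuotRangeEquiv A _ ≪≫ₗ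
    Submodule.Quotient.equiv _ _ (kerBaseChangeEquiv A g)
      (by rw [← range_comp, kerBaseChangeEquiv_comp_baseChange_toKer]) ≪≫ₗ
    (cohomOfEquivCokernel (baseChange_comp_eq_zero A hfg)).symm

end BaseChange

theorem statement18_general
    (A : Type) [CommRing A] [Algebra ℝ A]
    (Λ : ℕ → Type) [∀ p, AddCommGroup (Λ p)] [∀ p, Module ℝ (Λ p)]
    (d : ∀ p, Λ p →ₗ[ℝ] Λ (p + 1))
    (hdd : ∀ p, (d (p + 1)) ∘ₗ (d p) = 0) :
    (∀ p : ℕ, Nonempty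
      ((A ⊗[ℝ] cohomOf (d p) (d (p + 1))) ≃ₗ[A]
        cohomOf ((d p).baseChange A) ((d (p + 1)).baseChange A))) ∧
    Nonempty ((A ⊗[ℝ] ↥(LinearMap.ker (d 0))) ≃ₗ[A] ↥(LinearMap.ker ((d 0).baseChange A))) ∧
    (Nonempty (↥(LinearMap.ker (d 0)) ≃ₗ[ℝ] ℝ) →
      Nonempty (↥(LinearMap.ker ((d 0).baseChange A)) ≃ₗ[A] A)) :=
  ⟨fun p => ⟨cohomOfBaseChangeEquiv A (hdd p)⟩, ⟨kerBaseChangeEquiv A (d 0)⟩,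
    fun ⟨e⟩ => ⟨(kerBaseChangeEquiv A (d 0)).symm ≪≫ₗ e.baseChange ℝ A _ _ ≪≫ₗ
      TensorProduct.AlgebraTensorModule.rid ℝ A A⟩⟩

/-- for a Weil algebra `A` and the de Rham complex `(Λ, d)` of the manifold
`M^A` (formalized as a cochain complex of real vector spaces `Λ : ℕ → Type` with
differentials `d p : Λ p → Λ (p+1)`, `d ∘ d = 0`), the cohomology `H^p(M^A, A)` of the
complex of `A`-valued forms `(A ⊗ Λ, id_A ⊗ d)` is canonically isomorphic in each degree
to `A ⊗ H^p_dR(M^A)`; in particular, if `M^A` is connected (i.e. `H^0_dR(M^A) ≅ ℝ`) then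
`H^0(M^A, A) ≅ A`. -/
theorem statement18
    (A : Type) [CommRing A] [Algebra ℝ A] [FiniteDimensional ℝ A] [IsLocalRing A]
    (Λ : ℕ → Type) [∀ p, AddCommGroup (Λ p)] [∀ p, Module ℝ (Λ p)]
    (d : ∀ p, Λ p →ₗ[ℝ] Λ (p + 1))
    (hdd : ∀ p, (d (p + 1)) ∘ₗ (d p) = 0) :
    (∀ p : ℕ, Nonempty
      ((A ⊗[ℝ] cohomOf (d p) (d (p + 1))) ≃ₗ[A]
        cohomOf ((d p).baseChange A) ((d (p + 1)).baseChange A))) ∧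
    Nonempty ((A ⊗[ℝ] ↥(LinearMap.ker (d 0))) ≃ₗ[A] ↥(LinearMap.ker ((d 0).baseChange A))) ∧
    (Nonempty (↥(LinearMap.ker (d 0)) ≃ₗ[ℝ] ℝ) →
      Nonempty (↥(LinearMap.ker ((d 0).baseChange A)) ≃ₗ[A] A)) :=
  statement18_general A Λ d hdd
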